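/- For all integers a > b ≥ 0 and all x > 0, one has I_b(x)² − I_a(x) I_{2b-a}(x) > 0; in particular I_b(x)² > I_{b-1}(x) I_{b+1}(x) for b ≥ 1 (log-concavity of j ↦ I_j(x) in the index). -/

import Mathlib

/-- The modified Bessel function of the first kind `I_j(x)`, `j ∈ ℤ`,
defined by its power series (extended to negative indices by `I_{-j} = I_j`). -/
noncomputable def besselI (j : ℤ) (x : ℝ) : ℝ :=
  ∑' s : ℕ, (x / 2) ^ (j.natAbs + 2 * s) /
    ((Nat.factorial s : ℝ) * (Nat.factorial (j.natAbs + s) : ℝ))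

/-- The determinant `f_{k,n}(x) = det (I_{k_j - n_i}(x))_{i,j}`. -/
noncomputable def fdet (l : ℕ) (k n : Fin l → ℤ) (x : ℝ) : ℝ :=
  Matrix.det (fun i j : Fin l => besselI (k j - n i) x)

/-! For naturals `m, n`, multiplying the power series and applying Vandermonde's identity gives
`I_{m+n}(x) I_{m-n}(x) = ∑ₖ C(2k, k+m) C(2k, k+n) / (2k)! · (x/2)^{2k}`. Taking `m = b` and
`n = a - b > 0`, every coefficient is at most the one for `n = 0`, i.e. for `I_b(x)²`, because the
central binomial coefficient `C(2k, k)` is the largest in its row; at `k = m + n` the inequality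
is strict. -/

open Finset Nat

namespace Nat

theorem sum_antidiagonal_choose_mul_choose_add (r N t : ℕ) :
    ∑ ij ∈ antidiagonal t, t.choose ij.1 * N.choose (r + ij.1) = (N + t).choose (r + t) := by
  have hlow : ∑ k ∈ range r, N.choose k * t.choose (r + t - k) = 0 :=
    sum_eq_zero fun k hk => by
      rw [choose_eq_zero_of_lt (n := t) (by rw [mem_range] at hk; omega), mul_zero]
  rw [add_choose_eq,
    Finset.Nat.sum_antidiagonal_eq_sum_range_succ (fun i j => N.choose i * t.choose j),
    Finset.Nat.sum_antidiagonal_eq_sum_range_succ (fun i j => t.choose i * N.choose (r + i)),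
    show (r + t).succ = r + (t + 1) by omega, Finset.sum_range_add, hlow, zero_add]
  refine Finset.sum_congr rfl fun i hi => ?_
  rw [mem_range] at hi
  rw [mul_comm, show r + t - (r + i) = t - i by omega, choose_symm (by omega)]

theorem choose_succ_lt_choose {n r : ℕ} (h : n ≤ 2 * r) (hr : r ≤ n) :
    n.choose (r + 1) < n.choose r := by
  refine Nat.lt_of_mul_lt_mul_right (a := r + 1) ?_
  rw [choose_succ_right_eq]
  exact Nat.mul_lt_mul_of_pos_left (by omega) (choose_pos hr)

theorem choose_two_mul_add_lt {k n : ℕ} (hn : 0 < n) (hnk : n ≤ k) :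
    (2 * k).choose (k + n) < (2 * k).choose k := by
  induction n, hn using Nat.le_induction with
  | base => exact choose_succ_lt_choose (by omega) (by omega)
  | succ n hn ih =>
    exact (choose_succ_lt_choose (r := k + n) (by omega) (by omega)).trans (ih (by omega))

end Nat

noncomputable def besselTerm (m : ℕ) (y : ℝ) (s : ℕ) : ℝ :=
  y ^ (m + 2 * s) / ((s ! : ℝ) * ((m + s)! : ℝ))

theorem besselI_eq_tsum_besselTerm (j : ℤ) (x : ℝ) :
    besselI j x = ∑' s, besselTerm j.natAbs (x / 2) s :=
  rfl

theorem besselI_neg (j : ℤ) (x : ℝ) : besselI (-j) x = besselI j x := by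
  simp only [besselI_eq_tsum_besselTerm, Int.natAbs_neg]

theorem summable_norm_besselTerm (m : ℕ) (y : ℝ) :
    Summable fun s => ‖besselTerm m y s‖ := by
  refine Summable.of_nonneg_of_le (fun s => norm_nonneg _) (fun s => ?_)
    ((Real.summable_pow_div_factorial (y ^ 2)).mul_left (|y| ^ m))
  have hfac : (1 : ℝ) ≤ (m + s)! := by exact_mod_cast (m + s).factorial_pos
  have hden : (0 : ℝ) < (s ! : ℝ) * (m + s)! := by positivity
  calc ‖besselTerm m y s‖ = |y| ^ m * (y ^ 2) ^ s / ((s ! : ℝ) * (m + s)!) := by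
        rw [besselTerm, Real.norm_eq_abs, abs_div, abs_pow, abs_of_pos hden, pow_add, pow_mul,
          sq_abs]
    _ ≤ |y| ^ m * (y ^ 2) ^ s / s ! :=
        div_le_div_of_nonneg_left (by positivity) (by positivity)
          (le_mul_of_one_le_right (by positivity) hfac)
    _ = |y| ^ m * ((y ^ 2) ^ s / s !) := mul_div_assoc _ _ _

noncomputable def besselProdCoeff (m n k : ℕ) : ℝ :=
  ((2 * k).choose (k + m) * (2 * k).choose (k + n) : ℕ) / (2 * k)!

theorem besselProdCoeff_comm (m n k : ℕ) : besselProdCoeff m n k = besselProdCoeff n m k := by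
  rw [besselProdCoeff, besselProdCoeff, mul_comm]

theorem besselProdCoeff_eq_zero_of_lt {m k : ℕ} (n : ℕ) (h : k < m) :
    besselProdCoeff m n k = 0 := by
  rw [besselProdCoeff, choose_eq_zero_of_lt (by omega), zero_mul, Nat.cast_zero, zero_div]

theorem besselProdCoeff_add {m n : ℕ} (hnm : n ≤ m) (t : ℕ) :
    besselProdCoeff m n (m + t) =
      ((2 * m + t + t).choose (m + n + t) : ℕ) / ((t ! : ℝ) * (2 * m + t)!) := by
  have h₁ : ((2 * m + t + t).choose (2 * m + t) : ℝ) =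
      (2 * m + t + t)! / ((2 * m + t)! * t !) :=
    Nat.cast_add_choose ℝ
  have h₂ : ((2 * m + t + t).choose (m + n + t) : ℝ) =
      (2 * m + t + t)! / ((m + n + t)! * (m - n + t)!) := by
    rw [show 2 * m + t + t = (m + n + t) + (m - n + t) by omega, Nat.cast_add_choose]
  rw [besselProdCoeff, show 2 * (m + t) = 2 * m + t + t by ring,
    show m + t + m = 2 * m + t by ring, show m + t + n = m + n + t by ring, Nat.cast_mul, h₁,
    h₂]
  field_simp

theorem besselTerm_mul_besselTerm {m n : ℕ} (hnm : n ≤ m) (y : ℝ) (i j : ℕ) :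
    besselTerm (m + n) y i * besselTerm (m - n) y j =
      ((i + j).choose i * (2 * m + (i + j)).choose (m + n + i) : ℕ) /
        (((i + j)! : ℝ) * (2 * m + (i + j))!) * y ^ (2 * (m + (i + j))) := by
  have h : ((2 * m + (i + j)).choose (m + n + i) : ℝ) =
      (2 * m + (i + j))! / ((m + n + i)! * (m - n + j)!) := by
    rw [show 2 * m + (i + j) = (m + n + i) + (m - n + j) by omega, Nat.cast_add_choose]
  rw [besselTerm, besselTerm, Nat.cast_mul, Nat.cast_add_choose, h,
    show 2 * (m + (i + j)) = m + n + 2 * i + (m - n + 2 * j) by omega, pow_add]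
  field_simp
  ring

theorem sum_antidiagonal_besselTerm_mul {m n : ℕ} (hnm : n ≤ m) (y : ℝ) (t : ℕ) :
    ∑ ij ∈ antidiagonal t, besselTerm (m + n) y ij.1 * besselTerm (m - n) y ij.2 =
      besselProdCoeff m n (m + t) * y ^ (2 * (m + t)) := by
  rw [besselProdCoeff_add hnm, ← Nat.sum_antidiagonal_choose_mul_choose_add, Nat.cast_sum,
    sum_div, sum_mul]
  refine sum_congr rfl fun ij hij => ?_
  rw [Finset.HasAntidiagonal.mem_antidiagonal] at hij
  rw [besselTerm_mul_besselTerm hnm, hij]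

theorem hasSum_besselI_mul_of_le {m n : ℕ} (hnm : n ≤ m) (x : ℝ) :
    HasSum (fun k => besselProdCoeff m n k * (x / 2) ^ (2 * k))
      (besselI (m + n) x * besselI (m - n) x) := by
  have hf := summable_norm_besselTerm (m + n) (x / 2)
  have hg := summable_norm_besselTerm (m - n) (x / 2)
  rw [besselI_eq_tsum_besselTerm, besselI_eq_tsum_besselTerm,
    show ((m : ℤ) + n).natAbs = m + n by omega, show ((m : ℤ) - n).natAbs = m - n by omega,
    tsum_mul_tsum_eq_tsum_sum_antidiagonal_of_summable_norm hf hg, ← hasSum_nat_add_iff' m,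
    sum_eq_zero fun k hk => by rw [besselProdCoeff_eq_zero_of_lt n (mem_range.1 hk), zero_mul],
    sub_zero]
  simp_rw [add_comm _ m, ← sum_antidiagonal_besselTerm_mul hnm]
  exact (summable_norm_sum_mul_antidiagonal_of_summable_norm hf hg).of_norm.hasSum

theorem hasSum_besselI_mul (m n : ℕ) (x : ℝ) :
    HasSum (fun k => besselProdCoeff m n k * (x / 2) ^ (2 * k))
      (besselI (m + n) x * besselI (m - n) x) := by
  rcases le_total n m with hnm | hmn
  · exact hasSum_besselI_mul_of_le hnm x
  · simpa only [besselProdCoeff_comm n m, add_comm (n : ℤ), ← besselI_neg (n - m), neg_sub]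
      using hasSum_besselI_mul_of_le hmn x

theorem besselProdCoeff_le (m n k : ℕ) : besselProdCoeff m n k ≤ besselProdCoeff m 0 k := by
  have h := choose_le_middle (k + n) (2 * k)
  rw [Nat.mul_div_cancel_left k two_pos] at h
  rw [besselProdCoeff, besselProdCoeff, add_zero]
  gcongr

theorem besselProdCoeff_lt (m : ℕ) {n : ℕ} (hn : 0 < n) :
    besselProdCoeff m n (m + n) < besselProdCoeff m 0 (m + n) := by
  have h := choose_two_mul_add_lt hn (Nat.le_add_left n m)
  have hpos : 0 < (2 * (m + n)).choose (m + n + m) := choose_pos (by omega)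
  rw [besselProdCoeff, besselProdCoeff, add_zero]
  gcongr

theorem besselI_add_mul_besselI_sub_lt_sq (m : ℕ) {n : ℕ} (hn : 0 < n) {x : ℝ} (hx : 0 < x) :
    besselI (m + n) x * besselI (m - n) x < besselI m x ^ 2 := by
  refine hasSum_lt (i := m + n) (fun k => ?_) ?_ (hasSum_besselI_mul m n x)
    (by simpa [sq] using hasSum_besselI_mul m 0 x)
  · exact mul_le_mul_of_nonneg_right (besselProdCoeff_le m n k) (by positivity)
  · exact mul_lt_mul_of_pos_right (besselProdCoeff_lt m hn) (by positivity)

theorem besselI_mul_besselI_two_mul_sub_lt_sq {a b : ℤ} (hab : b < a) (hb : 0 ≤ b) {x : ℝ}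
    (hx : 0 < x) : besselI a x * besselI (2 * b - a) x < besselI b x ^ 2 := by
  lift b to ℕ using hb
  obtain ⟨n, rfl⟩ : ∃ n : ℕ, a = b + n := ⟨(a - b).toNat, by omega⟩
  rw [show 2 * (b : ℤ) - (b + n) = b - n by ring]
  exact besselI_add_mul_besselI_sub_lt_sq b (by omega) hx

/-- For integers `a > b ≥ 0` and `x > 0`: `I_b(x)² - I_a(x) I_{2b-a}(x) > 0`; in
particular `I_b(x)² > I_{b-1}(x) I_{b+1}(x)` for `b ≥ 1` (log-concavity in the index). -/
theorem besselI_logConcave (a b : ℤ) (hab : b < a) (hb : 0 ≤ b) (x : ℝ) (hx : 0 < x) :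
    0 < besselI b x ^ 2 - besselI a x * besselI (2 * b - a) x ∧
    (1 ≤ b → besselI (b - 1) x * besselI (b + 1) x < besselI b x ^ 2) := by
  refine ⟨sub_pos.2 (besselI_mul_besselI_two_mul_sub_lt_sq hab hb hx), fun _ => ?_⟩
  rw [mul_comm, ← show 2 * b - (b + 1) = b - 1 by ring]
  exact besselI_mul_besselI_two_mul_sub_lt_sq (lt_add_one b) hb hx
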